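/- arXiv:2109.14329 — 2 statements merged into one kernel-verified Lean document; each statement's English description precedes it below -/
import Mathlib

section
/- Let λ_1, ..., λ_m be independent random variables, each taking values in {−1, +1}, with P(λ_j = +1) = p_j ∈ [0,1]. Set u₁ = Σ_{j=1}^m p_j, u₂ = 2u₁ − m, and assume u₁ > 0 and u₂ ≥ 0. Then for every δ ≥ 0, with y = (m + (1+δ)u₂)/(2u₁) = 1 + δ(1 − m/(2u₁)), one has P(Σ_{j=1}^m λ_j ≥ (1+δ) u₂) ≤ exp(u₁ (y(1 − ln y) − 1)). -/
/-!
Chernoff's method with the optimal exponent. A `±1`-valued variable with `P(X = 1) = p` has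
`E[e^{tX}] = e^{-t}(1 + p(e^{2t} - 1)) ≤ e^{-t} exp(p(e^{2t} - 1))`, so by independence and
Markov's inequality `P(∑ λ_j ≥ a) ≤ e^{-t(a + m)} exp(u₁(e^{2t} - 1))` for every `t ≥ 0`.
Since `a + m = 2u₁y` with `y ≥ 1`, the minimizing choice `e^{2t} = y` gives `exp(u₁ f(y))`.
-/

open MeasureTheory ProbabilityTheory Real

lemma exp_mul_eq_of_forall_eq_one_or_eq_neg_one {Ω : Type*} {X : Ω → ℝ}
    (hX : ∀ ω, X ω = 1 ∨ X ω = -1) (t : ℝ) :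
    (fun ω => exp (t * X ω))
      = fun ω => exp (-t) + {ω | X ω = 1}.indicator (fun _ => exp t - exp (-t)) ω := by
  funext ω
  rcases hX ω with h | h <;> norm_num [Set.indicator_apply, h]

section PlusMinusOne

variable {Ω : Type*} [MeasurableSpace Ω] {P : Measure Ω} {X : Ω → ℝ}

lemma integrable_exp_mul_of_forall_eq_one_or_eq_neg_one [IsFiniteMeasure P]
    (hXm : Measurable X) (hX : ∀ ω, X ω = 1 ∨ X ω = -1) (t : ℝ) :
    Integrable (fun ω => exp (t * X ω)) P := by
  rw [exp_mul_eq_of_forall_eq_one_or_eq_neg_one hX t]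
  exact (integrable_const _).add
    ((integrable_const _).indicator (hXm (measurableSet_singleton 1)))

lemma mgf_eq_of_forall_eq_one_or_eq_neg_one [IsProbabilityMeasure P]
    (hXm : Measurable X) (hX : ∀ ω, X ω = 1 ∨ X ω = -1) {p : ℝ} (hp : 0 ≤ p)
    (hP : P {ω | X ω = 1} = ENNReal.ofReal p) (t : ℝ) :
    mgf X P t = exp (-t) * (1 + p * (exp (2 * t) - 1)) := by
  have hA : MeasurableSet {ω | X ω = 1} := hXm (measurableSet_singleton 1)
  have hexp : exp t = exp (-t) * exp (2 * t) := by rw [← exp_add]; ring_nf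
  rw [mgf, exp_mul_eq_of_forall_eq_one_or_eq_neg_one hX t,
    integral_add (integrable_const _) ((integrable_const _).indicator hA),
    integral_const, integral_indicator_const _ hA, measureReal_def, measureReal_def, hP,
    ENNReal.toReal_ofReal hp, measure_univ, ENNReal.toReal_one, smul_eq_mul, smul_eq_mul, hexp]
  ring

lemma mgf_le_of_forall_eq_one_or_eq_neg_one [IsProbabilityMeasure P]
    (hXm : Measurable X) (hX : ∀ ω, X ω = 1 ∨ X ω = -1) {p : ℝ} (hp : 0 ≤ p)
    (hP : P {ω | X ω = 1} = ENNReal.ofReal p) (t : ℝ) :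
    mgf X P t ≤ exp (-t) * exp (p * (exp (2 * t) - 1)) := by
  rw [mgf_eq_of_forall_eq_one_or_eq_neg_one hXm hX hp hP t]
  gcongr
  linarith [add_one_le_exp (p * (exp (2 * t) - 1))]

end PlusMinusOne

lemma measureReal_sum_ge_le_exp_of_eq_one_or_eq_neg_one {Ω : Type*} [MeasurableSpace Ω]
    {P : Measure Ω} [IsProbabilityMeasure P] {m : ℕ} {L : Fin m → Ω → ℝ}
    (hLmeas : ∀ j, Measurable (L j)) (hindep : iIndepFun L P)
    (hval : ∀ j ω, L j ω = 1 ∨ L j ω = -1) {p : Fin m → ℝ} (hp : ∀ j, 0 ≤ p j)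
    (hP : ∀ j, P {ω | L j ω = 1} = ENNReal.ofReal (p j)) (a : ℝ) {t : ℝ} (ht : 0 ≤ t) :
    P.real {ω | a ≤ ∑ j, L j ω}
      ≤ exp (-t * (a + m) + (∑ j, p j) * (exp (2 * t) - 1)) := by
  have hsum : (fun ω => ∑ j, L j ω) = ∑ j, L j :=
    funext fun ω => (Finset.sum_apply ω _ L).symm
  have hint : Integrable (fun ω => exp (t * ∑ j, L j ω)) P := by
    simpa only [Finset.sum_apply] using hindep.integrable_exp_mul_sum hLmeas
      (s := Finset.univ) fun j _ => integrable_exp_mul_of_forall_eq_one_or_eq_neg_one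
        (hLmeas j) (hval j) t
  calc P.real {ω | a ≤ ∑ j, L j ω}
      ≤ exp (-t * a) * mgf (fun ω => ∑ j, L j ω) P t := measure_ge_le_exp_mul_mgf a ht hint
    _ = exp (-t * a) * ∏ j, mgf (L j) P t := by rw [hsum, hindep.mgf_sum hLmeas]
    _ ≤ exp (-t * a) * ∏ j, (exp (-t) * exp (p j * (exp (2 * t) - 1))) := by
        gcongr with j
        · exact fun j _ => mgf_nonneg
        · exact mgf_le_of_forall_eq_one_or_eq_neg_one (hLmeas j) (hval j) (hp j) (hP j) t
    _ = exp (-t * (a + m) + (∑ j, p j) * (exp (2 * t) - 1)) := by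
        rw [Finset.prod_mul_distrib, Finset.prod_const, Finset.card_univ, Fintype.card_fin,
          ← exp_nat_mul, ← exp_sum, ← Finset.sum_mul, ← exp_add, ← exp_add]
        ring_nf

/-- Optimized upper-tail Chernoff bound (Theorem 2, case
`s_w ≥ 0`): for independent ±1-valued `λ_j` with `P(λ_j = +1) = p_j`,
`u₁ = ∑ p_j > 0`, `u₂ = 2u₁ − m ≥ 0`, and any `δ ≥ 0`, setting
`y = (m + (1+δ)u₂)/(2u₁)`, one has
`P(∑ λ_j ≥ (1+δ)u₂) ≤ exp(u₁ (y(1 − ln y) − 1))`. -/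
theorem stmt_5 {Ω : Type*} [MeasurableSpace Ω] (P : Measure Ω) [IsProbabilityMeasure P]
    (m : ℕ) (L : Fin m → Ω → ℝ) (hLmeas : ∀ j, Measurable (L j))
    (hindep : iIndepFun L P)
    (hval : ∀ j ω, L j ω = 1 ∨ L j ω = -1)
    (p : Fin m → ℝ) (hp : ∀ j, p j ∈ Set.Icc (0 : ℝ) 1)
    (hP : ∀ j, P {ω | L j ω = 1} = ENNReal.ofReal (p j))
    (u₁ u₂ : ℝ) (hu₁ : u₁ = ∑ j, p j) (hu₁pos : 0 < u₁)
    (hu₂ : u₂ = 2 * u₁ - m) (hu₂nonneg : 0 ≤ u₂)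
    (δ : ℝ) (hδ : 0 ≤ δ)
    (y : ℝ) (hy : y = ((m : ℝ) + (1 + δ) * u₂) / (2 * u₁)) :
    P {ω | (1 + δ) * u₂ ≤ ∑ j, L j ω}
      ≤ ENNReal.ofReal (Real.exp (u₁ * (y * (1 - Real.log y) - 1))) := by
  have hmy : (m : ℝ) + (1 + δ) * u₂ = 2 * u₁ * y := by
    rw [hy]; field_simp
  have hy1 : 1 ≤ y := by
    rw [hy, le_div_iff₀ (by positivity)]
    nlinarith
  have hexp : exp (2 * (log y / 2)) = y := by
    rw [mul_div_cancel₀ _ two_ne_zero, exp_log (by linarith)]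
  have hbound := measureReal_sum_ge_le_exp_of_eq_one_or_eq_neg_one hLmeas hindep hval
    (fun j => (hp j).1) hP ((1 + δ) * u₂) (div_nonneg (log_nonneg hy1) zero_le_two)
  rw [← hu₁, hexp, add_comm _ (m : ℝ), hmy] at hbound
  rw [← ofReal_measureReal]
  refine ENNReal.ofReal_le_ofReal (hbound.trans_eq (congrArg exp ?_))
  ring
end

section
/- Let λ_1, ..., λ_m be independent random variables, each taking values in {−1, +1}, with P(λ_j = +1) = p_j ∈ [0,1]. Set u₁ = Σ_{j=1}^m p_j, u₂ = 2u₁ − m, and β = m/(2u₁), and assume u₁ > 0 and u₂ ≥ 0. Then for every δ ≥ 0, P(Σ_{j=1}^m λ_j ≥ (1+δ) u₂) ≤ exp(− u₁ δ²(1 − β)² / (2(1 + δ(1 − β)))). -/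
/-!
Chernoff's method. A `±1` variable with `P(λ = 1) = p` has
`E e^{tλ} = e^{-t} (1 + p (e^{2t} - 1)) ≤ exp (-t + p (e^{2t} - 1))`, so by independence
`P(∑ λ_j ≥ a) ≤ exp (-t (a + m) + u₁ (e^{2t} - 1))` for `t ≥ 0`. For `a = (1 + δ) u₂` one
has `a + m = 2 u₁ y` with `y = 1 + δ (1 - β) ≥ 1`, and the optimal choice `e^{2t} = y` gives the
exponent `u₁ (y - 1 - y log y)`. Keeping two terms of the series of `log y = -log (1 - x)`,
`x = 1 - 1/y`, bounds this by `-u₁ (y - 1)² / (2y)`.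
-/

open MeasureTheory ProbabilityTheory Real Finset

lemma add_sq_div_two_le_neg_log_one_sub {x : ℝ} (hx₀ : 0 ≤ x) (hx₁ : x < 1) :
    x + x ^ 2 / 2 ≤ -log (1 - x) := by
  have hsum := hasSum_pow_div_log_of_abs_lt_one (abs_lt.2 ⟨by linarith, hx₁⟩)
  calc x + x ^ 2 / 2 = ∑ i ∈ range 2, x ^ (i + 1) / (i + 1) := by norm_num [sum_range_succ]
    _ ≤ -log (1 - x) := sum_le_hasSum (range 2) (fun n _ => by positivity) hsum

lemma sub_one_sub_mul_log_le {y : ℝ} (hy : 1 ≤ y) :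
    y - 1 - y * log y ≤ -((y - 1) ^ 2 / (2 * y)) := by
  have hy₀ : 0 < y := by linarith
  have hlog : 1 - y⁻¹ + (1 - y⁻¹) ^ 2 / 2 ≤ log y := by
    simpa [log_inv] using
      add_sq_div_two_le_neg_log_one_sub (x := 1 - y⁻¹) (by simp [inv_le_one_of_one_le₀ hy])
        (by simp [hy₀])
  have key : y * (1 - y⁻¹ + (1 - y⁻¹) ^ 2 / 2) = y - 1 + (y - 1) ^ 2 / (2 * y) := by
    field_simp
  nlinarith [mul_le_mul_of_nonneg_left hlog hy₀.le]

lemma mul_exp_add_one_sub_mul_exp_neg_le (p t : ℝ) :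
    p * exp t + (1 - p) * exp (-t) ≤ exp (-t + p * (exp (2 * t) - 1)) := by
  have hexp : exp (-t) * exp (2 * t) = exp t := by rw [← exp_add]; ring_nf
  have hmix : p * exp t + (1 - p) * exp (-t) = exp (-t) * (p * (exp (2 * t) - 1) + 1) := by
    linear_combination -p * hexp
  rw [hmix, exp_add]
  exact mul_le_mul_of_nonneg_left (add_one_le_exp _) (exp_pos _).le

section PlusMinusOne

variable {Ω : Type*} [MeasurableSpace Ω] {P : Measure Ω} [IsProbabilityMeasure P]

lemma mgf_of_eq_one_or_eq_neg_one {X : Ω → ℝ} (hX : Measurable X)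
    (hval : ∀ ω, X ω = 1 ∨ X ω = -1) {p : ℝ} (hp : 0 ≤ p)
    (hP : P {ω | X ω = 1} = ENNReal.ofReal p) (t : ℝ) :
    mgf X P t = p * exp t + (1 - p) * exp (-t) := by
  have hA : MeasurableSet {ω | X ω = 1} := hX (measurableSet_singleton 1)
  have hexp : (fun ω => exp (t * X ω))
      = fun ω => {ω | X ω = 1}.indicator (fun _ => exp t - exp (-t)) ω + exp (-t) := by
    funext ω
    rcases hval ω with h | h
    · simp [h]
    · norm_num [h]
  rw [mgf, hexp, integral_add ((integrable_const _).indicator hA) (integrable_const _),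
    integral_indicator_const _ hA, integral_const]
  simp only [measureReal_def, hP, ENNReal.toReal_ofReal hp, smul_eq_mul, measure_univ,
    ENNReal.toReal_one, one_mul]
  ring

lemma measure_sum_ge_le_of_eq_one_or_eq_neg_one {ι : Type*} [Fintype ι] {L : ι → Ω → ℝ}
    (hmeas : ∀ j, Measurable (L j)) (hindep : iIndepFun L P)
    (hval : ∀ j ω, L j ω = 1 ∨ L j ω = -1) {p : ι → ℝ} (hp : ∀ j, 0 ≤ p j)
    (hP : ∀ j, P {ω | L j ω = 1} = ENNReal.ofReal (p j)) (a : ℝ) {t : ℝ} (ht : 0 ≤ t) :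
    P {ω | a ≤ ∑ j, L j ω}
      ≤ ENNReal.ofReal (exp (-t * (a + Fintype.card ι) + (∑ j, p j) * (exp (2 * t) - 1))) := by
  have hsum_le : ∀ ω, (∑ j, L j) ω ≤ Fintype.card ι := fun ω => by
    rw [Finset.sum_apply, Fintype.card_eq_sum_ones, Nat.cast_sum, Nat.cast_one]
    exact sum_le_sum fun j _ => by rcases hval j ω with h | h <;> norm_num [h]
  have hint := integrable_exp_mul_of_le (μ := P) t _ ht (by fun_prop) (ae_of_all _ hsum_le)
  have hchernoff := measure_ge_le_exp_mul_mgf (μ := P) (X := ∑ j, L j) a ht hint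
  rw [hindep.mgf_sum hmeas] at hchernoff
  simp only [Finset.sum_apply] at hchernoff
  rw [← ofReal_measureReal]
  refine ENNReal.ofReal_le_ofReal (hchernoff.trans ?_)
  calc exp (-t * a) * ∏ j, mgf (L j) P t
      ≤ exp (-t * a) * ∏ j, exp (-t + p j * (exp (2 * t) - 1)) := by
        gcongr with j
        · exact fun _ _ => mgf_nonneg
        · rw [mgf_of_eq_one_or_eq_neg_one (hmeas j) (hval j) (hp j) (hP j)]
          exact mul_exp_add_one_sub_mul_exp_neg_le _ _
    _ = exp (-t * (a + Fintype.card ι) + (∑ j, p j) * (exp (2 * t) - 1)) := by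
        rw [← exp_sum, ← exp_add, sum_add_distrib, sum_const, ← sum_mul]
        simp only [card_univ, nsmul_eq_mul]
        congr 1; ring

end PlusMinusOne

/-- Quantitative upper-tail bound (rigorous form of Theorem 2,
upper tail, case `s_w ≥ 0`): for independent ±1-valued `λ_j` with
`P(λ_j = +1) = p_j`, `u₁ = ∑ p_j > 0`, `u₂ = 2u₁ − m ≥ 0`, `β = m/(2u₁)`,
and every `δ ≥ 0`,
`P(∑ λ_j ≥ (1+δ)u₂) ≤ exp(−u₁ δ²(1−β)²/(2(1 + δ(1−β))))`. -/
theorem stmt_11 {Ω : Type*} [MeasurableSpace Ω] (P : Measure Ω) [IsProbabilityMeasure P]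
    (m : ℕ) (L : Fin m → Ω → ℝ) (hLmeas : ∀ j, Measurable (L j))
    (hindep : iIndepFun L P)
    (hval : ∀ j ω, L j ω = 1 ∨ L j ω = -1)
    (p : Fin m → ℝ) (hp : ∀ j, p j ∈ Set.Icc (0 : ℝ) 1)
    (hP : ∀ j, P {ω | L j ω = 1} = ENNReal.ofReal (p j))
    (u₁ u₂ β : ℝ) (hu₁ : u₁ = ∑ j, p j) (hu₁pos : 0 < u₁)
    (hu₂ : u₂ = 2 * u₁ - m) (hu₂nonneg : 0 ≤ u₂)
    (hβ : β = (m : ℝ) / (2 * u₁))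
    (δ : ℝ) (hδ : 0 ≤ δ) :
    P {ω | (1 + δ) * u₂ ≤ ∑ j, L j ω}
      ≤ ENNReal.ofReal
          (Real.exp (-(u₁ * δ ^ 2 * (1 - β) ^ 2 / (2 * (1 + δ * (1 - β)))))) := by
  set y := 1 + δ * (1 - β) with hy
  have h1β : 1 - β = u₂ / (2 * u₁) := by rw [hβ, hu₂]; field_simp
  have hy₁ : 1 ≤ y := by
    have : 0 ≤ δ * (1 - β) := mul_nonneg hδ (h1β ▸ by positivity)
    linarith
  have hy₀ : 0 < y := by linarith
  have hthreshold : (1 + δ) * u₂ + m = 2 * u₁ * y := by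
    rw [hy, h1β, hu₂]; field_simp; ring
  refine (measure_sum_ge_le_of_eq_one_or_eq_neg_one hLmeas hindep hval (fun j => (hp j).1) hP
    ((1 + δ) * u₂) (t := log y / 2) (by have := log_nonneg hy₁; positivity)).trans ?_
  gcongr
  calc -(log y / 2) * ((1 + δ) * u₂ + Fintype.card (Fin m))
        + (∑ j, p j) * (exp (2 * (log y / 2)) - 1)
      = u₁ * (y - 1 - y * log y) := by
        rw [Fintype.card_fin, hthreshold, ← hu₁, mul_div_cancel₀ _ two_ne_zero, exp_log hy₀]
        ring
    _ ≤ u₁ * -((y - 1) ^ 2 / (2 * y)) := by gcongr; exact sub_one_sub_mul_log_le hy₁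
    _ = -(u₁ * δ ^ 2 * (1 - β) ^ 2 / (2 * y)) := by rw [hy]; ring
end
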